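/- arXiv:1812.02480 — 2 statements merged into one kernel-verified Lean document; each statement's English description precedes it below -/
import Mathlib

section
/- Let γ : [0,1] → T be a loop at 1⁻ and n ∈ ℕ. If δ_{n+1} : [0,∞) → T is continuous with δ_{n+1}(0) = 1⁻ and f^{n+1} ∘ δ_{n+1} = γ*, and δ_n : [0,∞) → T is continuous with δ_n(0) = 1⁻ and f^n ∘ δ_n = γ*, then f ∘ δ_{n+1} = δ_n. -/
open scoped Real NNReal

/-- The exponential covering map `e : ℝ → S¹`, `e t = exp (2 π i t)`. -/
noncomputable def eMap (t : ℝ) : Circle := Circle.exp (2 * Real.pi * t)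

/-- The `r`-torus `T = (S¹)^r`. -/
abbrev Torus (r : ℕ) := Fin r → Circle

/-- The point `1⁻ = (1,…,1)` of the torus. -/
noncomputable def onePt (r : ℕ) : Torus r := fun _ => 1

/-- The map `f(z₁,…,z_r) = (z₁^{m₁},…,z_r^{m_r})` on the torus. -/
noncomputable def fPow {r : ℕ} (m : Fin r → ℕ) (z : Torus r) : Torus r := fun i => z i ^ m i

/-- `γ* : [0,∞) → T`, defined by `γ*(t) = γ(t-k+1)` for `t ∈ [k-1,k]`. -/
noncomputable def loopExt {r : ℕ} (γ : Path (onePt r) (onePt r)) (t : ℝ≥0) : Torus r :=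
  γ ⟨Int.fract (t : ℝ), (Int.fract_nonneg _), (Int.fract_lt_one _).le⟩

/-- The standard loop `λ_s(t) = e(st)` in the circle. -/
noncomputable def lam (s : ℤ) : Path (1 : Circle) 1 where
  toFun t := eMap (s * t)
  continuous_toFun := by
    exact Circle.exp.continuous.comp (by fun_prop)
  source' := by simp [eMap]
  target' := by
    simp only [eMap, Set.Icc.coe_one, mul_one]
    rw [show (2 * Real.pi * (s:ℝ)) = (s:ℝ) * (2 * Real.pi) by ring]
    exact Circle.exp_int_mul_two_pi s

/-- The `m`-adic solenoid, as the inverse limit of circles under `z ↦ z^m`. -/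
def Solenoid (m : ℕ) : Type := {x : ℕ → Circle // ∀ n, (x (n + 1)) ^ m = x n}

noncomputable instance (m : ℕ) : TopologicalSpace (Solenoid m) :=
  instTopologicalSpaceSubtype

/-- The product `Σ = Σ_{m₁} × ⋯ × Σ_{m_r}` identified with the inverse limit of `(T, f)`. -/
def SigmaProd {r : ℕ} (m : Fin r → ℕ) : Type :=
  {x : ℕ → Torus r // ∀ n, fPow m (x (n + 1)) = x n}

noncomputable instance {r : ℕ} (m : Fin r → ℕ) : TopologicalSpace (SigmaProd m) :=
  instTopologicalSpaceSubtype

/-- The `n`-th coordinate projection `π_n : Σ → T`. -/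
def piProj {r : ℕ} (m : Fin r → ℕ) (n : ℕ) (x : SigmaProd m) : Torus r := x.1 n

/-- The projection `η_i : Σ → Σ_{m_i}`. -/
def eta {r : ℕ} (m : Fin r → ℕ) (i : Fin r) (x : SigmaProd m) : Solenoid (m i) :=
  ⟨fun n => x.1 n i, fun n => congrFun (x.2 n) i⟩

/-- The point `p₀ = (1⁻, 1⁻, …) ∈ Σ`. -/
noncomputable def basePt {r : ℕ} (m : Fin r → ℕ) : SigmaProd m :=
  ⟨fun _ => onePt r, fun _ => funext fun _ => one_pow _⟩

/-!
In the `i`-th coordinate, `(f ∘ δ_{n+1})ᵢ` and `(δ_n)ᵢ` have the same `m_i^n`-th power `γ*ᵢ`.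
Their quotient is therefore a continuous map from the connected space `[0,∞)` into the finite,
hence discrete, set of `m_i^n`-th roots of unity; it is `1` at `0`, so it is `1` everywhere.
-/

theorem Circle.finite_setOf_pow_eq_one {N : ℕ} (hN : 0 < N) : {z : Circle | z ^ N = 1}.Finite :=
  ((Polynomial.nthRoots N (1 : ℂ)).toFinset.finite_toSet.preimage
    Circle.coe_injective.injOn).subset fun (z : Circle) (hz : z ^ N = 1) => by
      show (z : ℂ) ∈ (Polynomial.nthRoots N (1 : ℂ)).toFinset
      rw [Multiset.mem_toFinset, Polynomial.mem_nthRoots hN, ← Circle.coe_pow, hz, Circle.coe_one]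

theorem eq_of_pow_eq_of_finite_torsion {X G : Type*} [TopologicalSpace X] [PreconnectedSpace X]
    [CommGroup G] [TopologicalSpace G] [IsTopologicalGroup G] [T1Space G] {N : ℕ}
    (hN : {z : G | z ^ N = 1}.Finite) {a b : X → G} (ha : Continuous a) (hb : Continuous b)
    (hab : ∀ x, a x ^ N = b x ^ N) {x₀ : X} (h₀ : a x₀ = b x₀) : a = b := by
  have : Finite {z : G | z ^ N = 1} := hN.to_subtype
  let q : X → {z : G | z ^ N = 1} := fun x => ⟨a x / b x, by simp [div_pow, hab]⟩
  have hq : Continuous q := (ha.div' hb).subtype_mk _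
  funext x
  have hconst := congrArg Subtype.val (PreconnectedSpace.constant inferInstance hq : q x = q x₀)
  simpa [q, h₀, div_eq_one] using hconst

theorem fPow_iterate_apply {r : ℕ} (m : Fin r → ℕ) (k : ℕ) (z : Torus r) (i : Fin r) :
    (fPow m)^[k] z i = z i ^ m i ^ k := by
  induction k generalizing z with
  | zero => simp
  | succ k ih => rw [Function.iterate_succ_apply, ih, fPow, ← pow_mul, ← pow_succ']

theorem f_comp_lift_succ_general {r : ℕ} (m : Fin r → ℕ) (hm : ∀ i, 2 ≤ m i)
    (γ : Path (onePt r) (onePt r)) (n : ℕ)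
    (δ₁ δ₀ : ℝ≥0 → Torus r) (hδ₁ : Continuous δ₁) (hδ₀ : Continuous δ₀)
    (h₁0 : δ₁ 0 = onePt r) (h₀0 : δ₀ 0 = onePt r)
    (h₁ : ∀ t, (fPow m)^[n + 1] (δ₁ t) = loopExt γ t)
    (h₀ : ∀ t, (fPow m)^[n] (δ₀ t) = loopExt γ t) :
    fPow m ∘ δ₁ = δ₀ := by
  funext t i
  have hpos : 0 < m i ^ n := pow_pos (by linarith [hm i]) n
  have same_power (s : ℝ≥0) : (δ₁ s i ^ m i) ^ m i ^ n = δ₀ s i ^ m i ^ n := by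
    rw [← pow_mul, ← pow_succ', ← fPow_iterate_apply, ← fPow_iterate_apply, h₁, h₀]
  have coord_eq : (fun s => δ₁ s i ^ m i) = fun s => δ₀ s i :=
    eq_of_pow_eq_of_finite_torsion (Circle.finite_setOf_pow_eq_one hpos) (by fun_prop)
      (by fun_prop) same_power (x₀ := 0) (by simp [h₁0, h₀0, onePt])
  exact congrFun coord_eq t

/-- **Lemma 2(d).** `f ∘ γ^{(n+1)} = γ^{(n)}` for the lifts of `γ*` through `f^{n+1}`
and `f^n` starting at `1⁻`. -/
theorem f_comp_lift_succ {r : ℕ} (hr : 0 < r) (m : Fin r → ℕ) (hm : ∀ i, 2 ≤ m i)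
    (hcop : ∀ i j, i ≠ j → Nat.Coprime (m i) (m j))
    (γ : Path (onePt r) (onePt r)) (n : ℕ)
    (δ₁ δ₀ : ℝ≥0 → Torus r) (hδ₁ : Continuous δ₁) (hδ₀ : Continuous δ₀)
    (h₁0 : δ₁ 0 = onePt r) (h₀0 : δ₀ 0 = onePt r)
    (h₁ : ∀ t, (fPow m)^[n + 1] (δ₁ t) = loopExt γ t)
    (h₀ : ∀ t, (fPow m)^[n] (δ₀ t) = loopExt γ t) :
    fPow m ∘ δ₁ = δ₀ :=
  f_comp_lift_succ_general m hm γ n δ₁ δ₀ hδ₁ hδ₀ h₁0 h₀0 h₁ h₀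
end

section
/- Let U ⊆ T be a set containing 1⁻, let 1 ≤ k < r, and let γ, ζ : [0,1] → U be loops at 1⁻ such that: for each i ∈ {1,…,k}, ρ_i ∘ γ is homotopic to λ_{s_i} with s_i ∈ ℤ∖{0}; ρ_{k+1} ∘ γ is homotopic to λ_{s_{k+1}} with s_{k+1} ∈ ℤ; for each i ∈ {1,…,k}, ρ_i ∘ ζ is homotopic to λ_{t_i} with t_i ∈ ℤ; and ρ_{k+1} ∘ ζ is homotopic to λ_{s₀} with s₀ ∈ ℤ∖{0}. Let l ∈ ℕ with l > max{|s₁|,…,|s_k|, |s_{k+1}|}. Then the concatenated loop ζ ∗ ⋯ ∗ ζ ∗ γ (with l copies of ζ), which is a loop at 1⁻ with image contained in U, satisfies: for each i ∈ {1,…,k+1}, ρ_i composed with this loop is homotopic to λ_{u_i} for some u_i ∈ ℤ∖{0}. -/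
open scoped Real NNReal

/-- Concatenation `ζ ∗ ⋯ ∗ ζ ∗ γ` with `l` copies of `ζ`. -/
noncomputable def iterConcat {X : Type*} [TopologicalSpace X] {x : X}
    (ζ γ : Path x x) : ℕ → Path x x
  | 0 => γ
  | (l + 1) => ζ.trans (iterConcat ζ γ l)

/-! Each coordinate of `ζ ∗ ⋯ ∗ ζ ∗ γ` is homotopic to `λ_{l tᵢ + sᵢ}`, because degrees of loops in
`S¹` add under concatenation, as one sees by lifting through `e` to the simply connected line.
The degree `l tᵢ + sᵢ` is non-zero: for `i ≤ k` we have `|sᵢ| < l`, so it vanishes only if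
`tᵢ = sᵢ = 0`, which `sᵢ ≠ 0` for `i < k` and `t_{k+1} = s₀ ≠ 0` rule out. -/

section iterConcat

variable {X Y : Type*} [TopologicalSpace X] [TopologicalSpace Y] {x : X}

lemma iterConcat_mem {U : Set X} {ζ γ : Path x x} (hζ : ∀ t, ζ t ∈ U) (hγ : ∀ t, γ t ∈ U) :
    ∀ l t, iterConcat ζ γ l t ∈ U
  | 0, t => hγ t
  | l + 1, t => by
    rw [iterConcat, Path.trans_apply]
    split_ifs
    exacts [hζ _, iterConcat_mem hζ hγ l _]

lemma iterConcat_map (ζ γ : Path x x) {f : X → Y} (hf : Continuous f) :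
    ∀ l, (iterConcat ζ γ l).map hf = iterConcat (ζ.map hf) (γ.map hf) l
  | 0 => rfl
  | l + 1 => by rw [iterConcat, iterConcat, Path.map_trans, iterConcat_map ζ γ hf l]

lemma Path.Homotopic.iterConcat {ζ ζ' γ γ' : Path x x} (hζ : ζ.Homotopic ζ')
    (hγ : γ.Homotopic γ') : ∀ l, (iterConcat ζ γ l).Homotopic (iterConcat ζ' γ' l)
  | 0 => hγ
  | l + 1 => hζ.hcomp (Path.Homotopic.iterConcat hζ hγ l)

end iterConcat

lemma continuous_eMap : Continuous eMap := Circle.exp.continuous.comp (by fun_prop)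

lemma eMap_add (x y : ℝ) : eMap (x + y) = eMap x * eMap y := by
  simp [eMap, mul_add, Circle.exp_add]

lemma eMap_intCast (n : ℤ) : eMap n = 1 := Circle.exp_two_pi_mul_int n

@[simp]
lemma lam_apply (s : ℤ) (t : unitInterval) : lam s t = eMap (s * t) := rfl

lemma Path.Homotopic.of_eMap_lifts {p q : Path (1 : Circle) 1} {a b : ℝ} (p' q' : Path a b)
    (hp : ∀ t, eMap (p' t) = p t) (hq : ∀ t, eMap (q' t) = q t) : p.Homotopic q := by
  have ha : (1 : Circle) = eMap a := by simpa using (hp 0).symm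
  have hb : (1 : Circle) = eMap b := by simpa using (hp 1).symm
  have hp' : p = (p'.map continuous_eMap).cast ha hb := Path.ext (funext hp).symm
  have hq' : q = (q'.map continuous_eMap).cast ha hb := Path.ext (funext hq).symm
  rw [hp', hq']
  exact ((SimplyConnectedSpace.paths_homotopic p' q').map ⟨eMap, continuous_eMap⟩).pathCast ha hb

lemma lam_trans_lam_homotopic (a b : ℤ) : ((lam a).trans (lam b)).Homotopic (lam (a + b)) := by
  refine .of_eMap_lifts ((Path.segment (0 : ℝ) a).trans (Path.segment (a : ℝ) (a + b)))
    (Path.segment (0 : ℝ) (a + b)) (fun t => ?_) (fun t => ?_)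
  · rw [Path.trans_apply, Path.trans_apply]
    split_ifs
    · simp [AffineMap.lineMap_apply_ring', mul_comm]
    · simp only [lam_apply, Path.segment_apply, AffineMap.lineMap_apply_ring']
      rw [add_sub_cancel_left, eMap_add, eMap_intCast, mul_one, mul_comm]
  · simp [AffineMap.lineMap_apply_ring', mul_comm]

lemma iterConcat_lam_homotopic (c d : ℤ) :
    ∀ l : ℕ, (iterConcat (lam c) (lam d) l).Homotopic (lam (l * c + d))
  | 0 => by simpa using .refl (lam d)
  | l + 1 => by
    have h := (Path.Homotopic.refl (lam c)).hcomp (iterConcat_lam_homotopic c d l)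
    rw [show ((l + 1 : ℕ) : ℤ) * c + d = c + (l * c + d) by push_cast; ring]
    exact h.trans (lam_trans_lam_homotopic _ _)

lemma natCast_mul_add_ne_zero {l : ℕ} {c d : ℤ} (hd : |d| < l) (hcd : c ≠ 0 ∨ d ≠ 0) :
    (l : ℤ) * c + d ≠ 0 := by
  intro h
  rcases eq_or_ne c 0 with rfl | hc
  · simp_all
  · have habs : |d| = l * |c| := by
      rw [show d = -(l * c) by omega, abs_neg, abs_mul, Nat.abs_cast]
    nlinarith [Int.one_le_abs hc]

theorem inductive_step_loops_general {r : ℕ} (U : Set (Torus r))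
    (k : ℕ) (hkr : k < r)
    (γ ζ : Path (onePt r) (onePt r)) (hγU : ∀ x, γ x ∈ U) (hζU : ∀ x, ζ x ∈ U)
    (s t : Fin r → ℤ) (s₀ : ℤ)
    (hs : ∀ i : Fin r, i.1 < k →
      s i ≠ 0 ∧ (γ.map (continuous_apply i)).Homotopic (lam (s i)))
    (hsk : (γ.map (continuous_apply (⟨k, hkr⟩ : Fin r))).Homotopic
      (lam (s ⟨k, hkr⟩)))
    (ht : ∀ i : Fin r, i.1 < k → (ζ.map (continuous_apply i)).Homotopic (lam (t i)))
    (hs₀ : s₀ ≠ 0)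
    (htk : (ζ.map (continuous_apply (⟨k, hkr⟩ : Fin r))).Homotopic (lam s₀))
    (l : ℕ) (hl : ∀ i : Fin r, i.1 ≤ k → |s i| < (l : ℤ)) :
    (∀ x, iterConcat ζ γ l x ∈ U) ∧
      ∀ i : Fin r, i.1 ≤ k → ∃ u : ℤ, u ≠ 0 ∧
        ((iterConcat ζ γ l).map (continuous_apply i)).Homotopic (lam u) := by
  refine ⟨iterConcat_mem hζU hγU l, fun i hi => ?_⟩
  have degree {c : ℤ} (hζ : (ζ.map (continuous_apply i)).Homotopic (lam c))
      (hγ : (γ.map (continuous_apply i)).Homotopic (lam (s i))) (hc : c ≠ 0 ∨ s i ≠ 0) :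
      ∃ u : ℤ, u ≠ 0 ∧ ((iterConcat ζ γ l).map (continuous_apply i)).Homotopic (lam u) := by
    refine ⟨l * c + s i, natCast_mul_add_ne_zero (hl i hi) hc, ?_⟩
    rw [iterConcat_map]
    exact (Path.Homotopic.iterConcat hζ hγ l).trans (iterConcat_lam_homotopic c (s i) l)
  rcases hi.lt_or_eq with hik | hik
  · exact degree (ht i hik) (hs i hik).2 (Or.inr (hs i hik).1)
  · obtain rfl : i = ⟨k, hkr⟩ := Fin.ext hik
    exact degree htk hsk (Or.inl hs₀)

/-- The inductive step of Lemma 5: concatenating `l` copies of `ζ` with `γ` yields a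
loop in `U` whose first `k+1` coordinate projections are all non-trivial. -/
theorem inductive_step_loops {r : ℕ} (U : Set (Torus r)) (hU : onePt r ∈ U)
    (k : ℕ) (hk1 : 1 ≤ k) (hkr : k < r)
    (γ ζ : Path (onePt r) (onePt r)) (hγU : ∀ x, γ x ∈ U) (hζU : ∀ x, ζ x ∈ U)
    (s t : Fin r → ℤ) (s₀ : ℤ)
    (hs : ∀ i : Fin r, i.1 < k →
      s i ≠ 0 ∧ (γ.map (continuous_apply i)).Homotopic (lam (s i)))
    (hsk : (γ.map (continuous_apply (⟨k, hkr⟩ : Fin r))).Homotopic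
      (lam (s ⟨k, hkr⟩)))
    (ht : ∀ i : Fin r, i.1 < k → (ζ.map (continuous_apply i)).Homotopic (lam (t i)))
    (hs₀ : s₀ ≠ 0)
    (htk : (ζ.map (continuous_apply (⟨k, hkr⟩ : Fin r))).Homotopic (lam s₀))
    (l : ℕ) (hl : ∀ i : Fin r, i.1 ≤ k → |s i| < (l : ℤ)) :
    (∀ x, iterConcat ζ γ l x ∈ U) ∧
      ∀ i : Fin r, i.1 ≤ k → ∃ u : ℤ, u ≠ 0 ∧
        ((iterConcat ζ γ l).map (continuous_apply i)).Homotopic (lam u) :=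
  inductive_step_loops_general U k hkr γ ζ hγU hζU s t s₀ hs hsk ht hs₀ htk l hl
end
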